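/- arXiv:2508.11688 — 2 statements merged into one kernel-verified Lean document; each statement's English description precedes it below -/
import Mathlib

section
/- Let f : ℂ → ℂ be continuous on the closed strip S = { z ∈ ℂ : −1 ≤ Im z ≤ 0 }, holomorphic (complex differentiable) on the open strip { z : −1 < Im z < 0 }, and bounded on S (there exists C with |f(z)| ≤ C for all z ∈ S). If f(u) = f(u − i) for every u ∈ ℝ, then f is constant on S. -/
/-!
Extend `f` from the strip `-1 < im ≤ 0` to `ℂ` with period `I`. The boundary condition makes the
extension continuous, and it is holomorphic off the lines `im ∈ ℤ`. These lines are removable by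
Morera's theorem, since a rectangle crossing one of them splits along it into two rectangles on
which Goursat's theorem applies. The extension is thus a bounded entire function, constant by
Liouville's theorem.
-/
open Complex Set intervalIntegral
open scoped Interval

namespace Complex

lemma im_sub_intCast_mul_I (z : ℂ) (n : ℤ) : (z - n * I).im = z.im - n := by
  simp

variable {E : Type*} [NormedAddCommGroup E] {f : ℂ → E}

lemma intervalIntegrable_vertical_of_continuousOn_rectangle {z w : ℂ}
    (hf : ContinuousOn f (Rectangle z w)) {c : ℝ} (hc : c ∈ [[z.re, w.re]]) {a b : ℝ}
    (hab : [[a, b]] ⊆ [[z.im, w.im]]) :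
    IntervalIntegrable (fun y : ℝ => f (c + y * I)) MeasureTheory.volume a b := by
  refine ContinuousOn.intervalIntegrable (hf.comp (by fun_prop) fun y hy => ?_)
  simpa [Rectangle, mem_reProdIm] using ⟨hc, hab hy⟩

variable [NormedSpace ℂ E]

lemma wedgeIntegral_add_wedgeIntegral_eq_split {z w : ℂ} (hf : ContinuousOn f (Rectangle z w))
    {b : ℝ} (hb : b ∈ [[z.im, w.im]]) :
    wedgeIntegral z w f + wedgeIntegral w z f =
      (wedgeIntegral z ⟨w.re, b⟩ f + wedgeIntegral ⟨w.re, b⟩ z f) +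
        (wedgeIntegral ⟨z.re, b⟩ w f + wedgeIntegral w ⟨z.re, b⟩ f) := by
  have hlow : [[z.im, b]] ⊆ [[z.im, w.im]] := uIcc_subset_uIcc_left hb
  have hup : [[b, w.im]] ⊆ [[z.im, w.im]] := uIcc_subset_uIcc_right hb
  simp only [wedgeIntegral_add_wedgeIntegral_eq]
  rw [← integral_add_adjacent_intervals
      (intervalIntegrable_vertical_of_continuousOn_rectangle hf right_mem_uIcc hlow)
      (intervalIntegrable_vertical_of_continuousOn_rectangle hf right_mem_uIcc hup),
    ← integral_add_adjacent_intervals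
      (intervalIntegrable_vertical_of_continuousOn_rectangle hf left_mem_uIcc hlow)
      (intervalIntegrable_vertical_of_continuousOn_rectangle hf left_mem_uIcc hup)]
  simp only [smul_add]
  abel

lemma wedgeIntegral_add_wedgeIntegral_eq_zero_of_im_ne {z w : ℂ} {b : ℝ}
    (hc : ContinuousOn f (Rectangle z w))
    (hd : ∀ x ∈ Rectangle z w, x.im ≠ b → DifferentiableAt ℂ f x)
    (hb : b ∉ uIoo z.im w.im) :
    wedgeIntegral z w f + wedgeIntegral w z f = 0 := by
  rw [wedgeIntegral_add_wedgeIntegral_eq]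
  refine integral_boundary_rect_eq_zero_of_differentiable_on_off_countable f z w ∅
    countable_empty hc fun x ⟨hx, _⟩ => hd x ?_ ?_
  · rw [mem_reProdIm] at hx
    exact mem_reProdIm.2 ⟨Ioo_subset_Icc_self hx.1, Ioo_subset_Icc_self hx.2⟩
  · rintro rfl
    exact hb (mem_reProdIm.1 hx).2

theorem isConservativeOn_of_differentiableAt_of_im_ne {U : Set ℂ} {b : ℝ}
    (hc : ContinuousOn f U) (hd : ∀ x ∈ U, x.im ≠ b → DifferentiableAt ℂ f x) :
    IsConservativeOn f U := by
  intro z w hzw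
  rw [← add_eq_zero_iff_eq_neg]
  have hdR : ∀ {z' w' : ℂ}, Rectangle z' w' ⊆ U → b ∉ uIoo z'.im w'.im →
      wedgeIntegral z' w' f + wedgeIntegral w' z' f = 0 := fun h hb =>
    wedgeIntegral_add_wedgeIntegral_eq_zero_of_im_ne (hc.mono h) (fun x hx => hd x (h hx)) hb
  by_cases hb : b ∈ uIoo z.im w.im
  · have hb' : b ∈ [[z.im, w.im]] := Ioo_subset_Icc_self hb
    have hlow : Rectangle z ⟨w.re, b⟩ ⊆ U :=
      (reProdIm_subset_iff'.2 (.inl ⟨subset_rfl, uIcc_subset_uIcc_left hb'⟩)).trans hzw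
    have hup : Rectangle ⟨z.re, b⟩ w ⊆ U :=
      (reProdIm_subset_iff'.2 (.inl ⟨subset_rfl, uIcc_subset_uIcc_right hb'⟩)).trans hzw
    rw [wedgeIntegral_add_wedgeIntegral_eq_split (hc.mono hzw) hb',
      hdR hlow right_notMem_uIoo, hdR hup left_notMem_uIoo, add_zero]
  · exact hdR hzw hb

theorem differentiableOn_of_differentiableAt_of_im_ne [CompleteSpace E] {U : Set ℂ} {b : ℝ}
    (hU : IsOpen U) (hc : ContinuousOn f U) (hd : ∀ x ∈ U, x.im ≠ b → DifferentiableAt ℂ f x) :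
    DifferentiableOn ℂ f U :=
  (isConservativeOn_and_continuousOn_iff_isDifferentiableOn hU).1
    ⟨isConservativeOn_of_differentiableAt_of_im_ne hc hd, hc⟩

end Complex

section PeriodicExtension

open Complex Filter

variable {X : Type*} {f : ℂ → X}

/-- `f` on the strip `-1 < im ≤ 0`, extended to `ℂ` with period `I`. -/
noncomputable def imPeriodicExtension (f : ℂ → X) (z : ℂ) : X :=
  f (z - ⌈z.im⌉ * I)

lemma imPeriodicExtension_eq_of_mem_Ioc {z : ℂ} {n : ℤ} (hz : z.im ∈ Ioc ((n : ℝ) - 1) n) :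
    imPeriodicExtension f z = f (z - n * I) := by
  rw [imPeriodicExtension, Int.ceil_eq_iff.2 hz]

lemma imPeriodicExtension_eq_of_mem_Icc (hper : ∀ u : ℝ, f u = f (u - I)) {z : ℂ} {n : ℤ}
    (hz : z.im ∈ Icc ((n : ℝ) - 1) n) :
    imPeriodicExtension f z = f (z - n * I) := by
  rcases hz.1.eq_or_lt with hbot | hlow
  · have hz' : z.im ∈ Ioc (((n - 1 : ℤ) : ℝ) - 1) ((n - 1 : ℤ) : ℝ) := by
      push_cast; constructor <;> linarith
    have hre : z - ((n - 1 : ℤ) : ℂ) * I = z.re := by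
      apply Complex.ext <;> simp [← hbot]
    rw [imPeriodicExtension_eq_of_mem_Ioc hz', hre, hper]
    congr 1
    apply Complex.ext <;> simp [← hbot]
  · exact imPeriodicExtension_eq_of_mem_Ioc ⟨hlow, hz.2⟩

lemma im_sub_ceil_im_mul_I_mem_Ioc (z : ℂ) : (z - ⌈z.im⌉ * I).im ∈ Ioc (-1) 0 := by
  rw [im_sub_intCast_mul_I]
  constructor <;> linarith [Int.le_ceil z.im, Int.ceil_lt_add_one z.im]

lemma norm_imPeriodicExtension_le [Norm X] {C : ℝ} (hC : ∀ z ∈ im ⁻¹' Icc (-1) 0, ‖f z‖ ≤ C)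
    (z : ℂ) : ‖imPeriodicExtension f z‖ ≤ C :=
  hC _ (Ioc_subset_Icc_self (im_sub_ceil_im_mul_I_mem_Ioc z))

lemma continuous_imPeriodicExtension [TopologicalSpace X]
    (hc : ContinuousOn f (im ⁻¹' Icc (-1) 0)) (hper : ∀ u : ℝ, f u = f (u - I)) :
    Continuous (imPeriodicExtension f) := by
  have hfin : LocallyFinite fun n : ℤ => im ⁻¹' Icc ((n : ℝ) - 1) n :=
    (locallyFinite_Icc_of_tendsto (tendsto_atTop_add_const_right _ _ tendsto_intCast_atTop_atTop)
      (tendsto_intCast_atBot_iff.2 tendsto_id)).preimage_continuous continuous_im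
  refine hfin.continuous ?_ (fun n => isClosed_Icc.preimage continuous_im) fun n => ?_
  · refine eq_univ_of_forall fun z => mem_iUnion.2 ⟨⌈z.im⌉, ?_⟩
    exact Ioc_subset_Icc_self (Int.ceil_eq_iff.1 rfl)
  · refine ContinuousOn.congr ?_ fun z hz => imPeriodicExtension_eq_of_mem_Icc hper hz
    refine hc.comp (by fun_prop) fun z hz => ?_
    simp only [mem_preimage, im_sub_intCast_mul_I, mem_Icc] at hz ⊢
    constructor <;> linarith [hz.1, hz.2]

lemma differentiableAt_imPeriodicExtension_of_im_ne [NormedAddCommGroup X] [NormedSpace ℂ X]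
    (hd : DifferentiableOn ℂ f (im ⁻¹' Ioo (-1) 0)) {z : ℂ} (hz : ∀ n : ℤ, z.im ≠ n) :
    DifferentiableAt ℂ (imPeriodicExtension f) z := by
  set n := ⌈z.im⌉
  have hmem : z.im ∈ Ioo ((n : ℝ) - 1) n :=
    ⟨(Int.ceil_eq_iff.1 rfl).1, (Int.le_ceil z.im).lt_of_ne (hz n)⟩
  have hloc : imPeriodicExtension f =ᶠ[nhds z] fun v => f (v - n * I) := by
    filter_upwards [(isOpen_Ioo.preimage continuous_im).mem_nhds hmem] with v hv
    exact imPeriodicExtension_eq_of_mem_Ioc (Ioo_subset_Ioc_self hv)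
  have hfz : DifferentiableAt ℂ f (z - n * I) := by
    refine hd.differentiableAt ((isOpen_Ioo.preimage continuous_im).mem_nhds ?_)
    simp only [mem_preimage, im_sub_intCast_mul_I, mem_Ioo]
    constructor <;> linarith [hmem.1, hmem.2]
  exact hloc.differentiableAt_iff.2 (hfz.comp z (differentiableAt_id.sub_const _))

theorem differentiable_imPeriodicExtension [NormedAddCommGroup X] [NormedSpace ℂ X]
    [CompleteSpace X] (hc : ContinuousOn f (im ⁻¹' Icc (-1) 0))
    (hd : DifferentiableOn ℂ f (im ⁻¹' Ioo (-1) 0)) (hper : ∀ u : ℝ, f u = f (u - I)) :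
    Differentiable ℂ (imPeriodicExtension f) := by
  intro z
  set n := ⌈z.im⌉
  have hU : IsOpen (im ⁻¹' Ioo ((n : ℝ) - 1) (n + 1)) := isOpen_Ioo.preimage continuous_im
  have hz : z.im ∈ Ioo ((n : ℝ) - 1) (n + 1) :=
    ⟨(Int.ceil_eq_iff.1 rfl).1, (Int.le_ceil z.im).trans_lt (lt_add_one _)⟩
  refine (differentiableOn_of_differentiableAt_of_im_ne (b := n) hU
    (continuous_imPeriodicExtension hc hper).continuousOn fun v hv hvn => ?_).differentiableAt
    (hU.mem_nhds hz)
  refine differentiableAt_imPeriodicExtension_of_im_ne hd fun m hm => hvn ?_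
  obtain ⟨h1, h2⟩ : (m : ℝ) ∈ Ioo ((n : ℝ) - 1) (n + 1) := hm ▸ hv
  have : n - 1 < m := by exact_mod_cast h1
  have : m < n + 1 := by exact_mod_cast h2
  rw [hm, show m = n by omega]

end PeriodicExtension

/-- A bounded continuous function on the closed strip `-1 ≤ Im z ≤ 0`, holomorphic on the
open strip, whose two boundary values agree (`f u = f (u - i)` for real `u`), is constant
on the closed strip (Liouville-type theorem used in the paper's Lemma 1). -/
theorem bounded_periodic_strip_function_constant
    (f : ℂ → ℂ)
    (hcont : ContinuousOn f {z : ℂ | -1 ≤ z.im ∧ z.im ≤ 0})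
    (hdiff : ∀ z : ℂ, -1 < z.im → z.im < 0 → DifferentiableAt ℂ f z)
    (hbdd : ∃ C : ℝ, ∀ z : ℂ, -1 ≤ z.im → z.im ≤ 0 → ‖f z‖ ≤ C)
    (hper : ∀ u : ℝ, f (u : ℂ) = f ((u : ℂ) - Complex.I)) :
    ∀ z w : ℂ, -1 ≤ z.im → z.im ≤ 0 → -1 ≤ w.im → w.im ≤ 0 → f z = f w := by
  intro z w hz1 hz2 hw1 hw2
  obtain ⟨C, hC⟩ := hbdd
  have hg : Differentiable ℂ (imPeriodicExtension f) :=
    differentiable_imPeriodicExtension hcont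
      (fun v hv => (hdiff v hv.1 hv.2).differentiableWithinAt) hper
  have hgC : Bornology.IsBounded (range (imPeriodicExtension f)) :=
    isBounded_iff_forall_norm_le.2 ⟨C, forall_mem_range.2
      (norm_imPeriodicExtension_le fun v hv => hC v hv.1 hv.2)⟩
  have hgf : ∀ v : ℂ, -1 ≤ v.im → v.im ≤ 0 → imPeriodicExtension f v = f v := fun v h1 h2 => by
    simpa using imPeriodicExtension_eq_of_mem_Icc hper (n := 0) (by simpa using ⟨h1, h2⟩)
  rw [← hgf z hz1 hz2, ← hgf w hw1 hw2, hg.apply_eq_apply_of_bounded hgC]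
end

section
/- Let Δ ∈ ℝ and let c : ℤ → ℂ be a function with Σ_{n ∈ ℤ} |c_n| < ∞. Define f : ℝ → ℂ by f(t) = Σ_{n ∈ ℤ} c_n · exp(i·(2n + Δ)·t). If there exist a ∈ ℝ and L > π such that f(t) = 0 for every t in the open interval (a, a + L), then f(t) = 0 for every t ∈ ℝ. -/
/-- Gesteau–Liu triviality of the relative commutant below the Hawking–Page transition:
a series over the frequencies `2n + Δ` with absolutely summable coefficients that vanishes
on an open time interval of width greater than `π` vanishes identically. -/
theorem spectral_sum_vanishing_on_long_interval
    (Δ : ℝ) (c : ℤ → ℂ) (hc : Summable fun n : ℤ => ‖c n‖)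
    (f : ℝ → ℂ)
    (hf : ∀ t : ℝ,
      f t = ∑' n : ℤ, c n * Complex.exp (Complex.I * (2 * (n : ℂ) + (Δ : ℂ)) * (t : ℂ)))
    (hvanish : ∃ (a L : ℝ), Real.pi < L ∧ ∀ t ∈ Set.Ioo a (a + L), f t = 0) :
    ∀ t : ℝ, f t = 0 := by
  obtain ⟨a, L, hL, hv⟩ := hvanish
  set g : ℝ → ℂ := fun t => ∑' n : ℤ, c n * Complex.exp (Complex.I * (2 * (n : ℂ)) * (t : ℂ))
    with hg
  have hfg : ∀ t : ℝ, f t = Complex.exp (Complex.I * (Δ : ℂ) * (t : ℂ)) * g t := by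
    intro t
    rw [hf t, hg]
    rw [← tsum_mul_left]
    refine tsum_congr fun n => ?_
    rw [show Complex.I * (2 * (n : ℂ) + (Δ : ℂ)) * (t : ℂ)
        = Complex.I * (2 * (n : ℂ)) * (t : ℂ) + Complex.I * (Δ : ℂ) * (t : ℂ) by ring,
      Complex.exp_add]
    ring
  have hper : Function.Periodic g Real.pi := by
    intro t
    simp only [hg]
    refine tsum_congr fun n => ?_
    congr 1
    push_cast
    rw [show Complex.I * (2 * (n : ℂ)) * ((t : ℂ) + (Real.pi : ℂ))
        = Complex.I * (2 * (n : ℂ)) * (t : ℂ) + (n : ℂ) * (2 * (Real.pi : ℂ) * Complex.I) by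
        ring,
      Complex.exp_add, Complex.exp_int_mul_two_pi_mul_I, mul_one]
  have hpi : (0 : ℝ) < Real.pi := Real.pi_pos
  -- g vanishes on the interval, hence everywhere by periodicity
  have hgzero : ∀ t : ℝ, g t = 0 := by
    intro t
    set a' : ℝ := a + (L - Real.pi) / 2 with ha'
    set k : ℤ := ⌈(a' - t) / Real.pi⌉ with hk
    have h1 : (a' - t) / Real.pi ≤ (k : ℝ) := Int.le_ceil _
    have h2 : (k : ℝ) < (a' - t) / Real.pi + 1 := Int.ceil_lt_add_one _
    have hlow : a' ≤ t + k * Real.pi := by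
      have := (div_le_iff₀ hpi).mp h1
      linarith
    have hhigh : t + k * Real.pi < a' + Real.pi := by
      have : (k : ℝ) * Real.pi < ((a' - t) / Real.pi + 1) * Real.pi := by
        exact mul_lt_mul_of_pos_right h2 hpi
      rw [add_mul, one_mul, div_mul_cancel₀ _ hpi.ne'] at this
      linarith
    have hmem : t + k * Real.pi ∈ Set.Ioo a (a + L) := by
      constructor
      · have : a < a' := by rw [ha']; linarith
        linarith
      · have : a' + Real.pi < a + L := by rw [ha']; linarith
        linarith
    have hf0 : f (t + k * Real.pi) = 0 := hv _ hmem
    have hg0 : g (t + k * Real.pi) = 0 := by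
      have := hfg (t + k * Real.pi)
      rw [hf0] at this
      have hne := Complex.exp_ne_zero (Complex.I * (Δ : ℂ) * ((t + k * Real.pi : ℝ) : ℂ))
      exact (mul_eq_zero.mp this.symm).resolve_left hne
    have : g (t + k * Real.pi) = g t := (hper.int_mul k) t
    rw [← this]; exact hg0
  intro t
  rw [hfg t, hgzero t, mul_zero]
end
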